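/- Splitting respects alias compatibility: if splitType T1 T2 T3, and some alias mode T is compatible with T1, then T is compatible with both T2 and T3. -/
import Mathlib

inductive Mode : Type
  | owned | unowned | shared
  | states : Finset ℕ → Mode
  deriving DecidableEq

def maybeOwnedM : Mode → Prop
  | .owned => True
  | .states _ => True
  | _ => False

def compat (m1 m2 : Mode) : Prop :=
  m1 = .unowned ∨ m2 = .unowned ∨ (m1 = .shared ∧ m2 = .shared)

/-- Splitting of modes for a single contract with asset flag `asset`. -/
inductive Split (asset : Prop) : Mode → Mode → Mode → Prop
  | split_unowned (m : Mode) : Split asset m m .unowned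
  | split_shared : Split asset .shared .shared .shared
  | split_owned_shared (m : Mode) :
      ¬ asset → maybeOwnedM m → Split asset m .shared .shared

theorem split_respects_compat (asset : Prop) (T m1 m2 m3 : Mode)
    (hsplit : Split asset m1 m2 m3) (hc : compat T m1) :
    compat T m2 ∧ compat T m3 := by
  cases hsplit with
  | split_unowned m => exact ⟨hc, Or.inr (Or.inl rfl)⟩
  | split_shared => exact ⟨hc, hc⟩
  | split_owned_shared m _ hm =>
    have hT : T = .unowned := by
      rcases hc with h | h | ⟨_, h⟩
      · exact h
      · subst h; simp [maybeOwnedM] at hm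
      · subst h; simp [maybeOwnedM] at hm
    exact ⟨Or.inl hT, Or.inl hT⟩
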